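/- Let P_1,…,P_N be orthogonal projections onto subspaces of EuclideanSpace ℝ (Fin n) and let p_1,…,p_N ∈ [1,∞) satisfy Σ_{j=1}^N (1/p_j) P_j ≤ I in the Loewner order. Then for every a with ‖a‖ ≤ 1: Σ_{j=1}^N (1/p_j) ψ(‖P_j a‖) ≤ ψ(‖a‖). -/

import Mathlib

/-- `ψ(x) = (1/2)[(1+x) log(1+x) + (1-x) log(1-x)]`, with the convention `0 · log 0 = 0`
(automatic since `Real.log 0 = 0`). -/
noncomputable def psi (x : ℝ) : ℝ :=
  (1 / 2) * ((1 + x) * Real.log (1 + x) + (1 - x) * Real.log (1 - x))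

/-!
Since `ψ(0) = ψ'(0) = 0` and `ψ'' = 1 / (1 - x²)` is increasing on `[0, 1)`, the ratio `ψ(x) / x²`
is nondecreasing on `(0, 1]`: integrating twice from `0` gives `ψ' ≤ x ψ''` and then
`2 ψ ≤ x ψ'`, which is the sign of `(ψ / x²)'`. Projections shrink norms, so
`ψ(‖P_j a‖) ≤ ‖P_j a‖² ψ(‖a‖) / ‖a‖²`; summing with the weights `1 / p_j` and applying the
Loewner inequality to `a` gives the claim.
-/

open Real Set

theorem nonneg_of_hasDerivAt_nonneg {g g' : ℝ → ℝ} {b x : ℝ}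
    (hg : ∀ t ∈ Ico 0 b, HasDerivAt g (g' t) t) (hg' : ∀ t ∈ Ioo 0 b, 0 ≤ g' t)
    (hg0 : g 0 = 0) (hx : x ∈ Ico 0 b) : 0 ≤ g x := by
  have hmono : MonotoneOn g (Ico 0 b) := by
    refine monotoneOn_of_hasDerivWithinAt_nonneg (f' := g') (convex_Ico 0 b)
      (fun t ht ↦ (hg t ht).continuousAt.continuousWithinAt) (fun t ht ↦ ?_) ?_
    · rw [interior_Ico] at ht ⊢
      exact (hg t (Ioo_subset_Ico_self ht)).hasDerivWithinAt
    · rwa [interior_Ico]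
  simpa [hg0] using hmono ⟨le_rfl, hx.1.trans_lt hx.2⟩ hx hx.1

theorem hasDerivAt_artanh {x : ℝ} (hx : x ∈ Ioo (-1) 1) :
    HasDerivAt artanh (1 - x ^ 2)⁻¹ x := by
  obtain ⟨hx₁, hx₂⟩ := hx
  have hplus : HasDerivAt (fun t ↦ 1 + t) 1 x := (hasDerivAt_id' x).const_add 1
  have hminus : HasDerivAt (fun t ↦ 1 - t) (-1) x := (hasDerivAt_id' x).const_sub 1
  have hlog : HasDerivAt (fun t ↦ 1 / 2 * (log (1 + t) - log (1 - t))) (1 - x ^ 2)⁻¹ x := by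
    refine (((hplus.log (by linarith)).fun_sub (hminus.log (by linarith))).const_mul _).congr_deriv
      ?_
    have : 1 + x ≠ 0 := by linarith
    have : 1 - x ≠ 0 := by linarith
    have : 1 - x ^ 2 ≠ 0 := by nlinarith
    field_simp
    ring
  refine hlog.congr_of_eventuallyEq ?_
  filter_upwards [Ioo_mem_nhds hx₁ hx₂] with t ht
  rw [artanh_eq_half_log (Ioo_subset_Icc_self ht),
    log_div (by linarith [ht.1]) (by linarith [ht.2])]

theorem hasDerivAt_psi {x : ℝ} (hx : x ∈ Ioo (-1) 1) : HasDerivAt psi (artanh x) x := by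
  obtain ⟨hx₁, hx₂⟩ := hx
  have hplus : HasDerivAt (fun t ↦ 1 + t) 1 x := (hasDerivAt_id' x).const_add 1
  have hminus : HasDerivAt (fun t ↦ 1 - t) (-1) x := (hasDerivAt_id' x).const_sub 1
  refine (((hplus.fun_mul (hplus.log (by linarith))).fun_add
    (hminus.fun_mul (hminus.log (by linarith)))).const_mul (1 / 2)).congr_deriv ?_
  rw [artanh_eq_half_log ⟨hx₁.le, hx₂.le⟩, log_div (by linarith) (by linarith)]
  have : 1 + x ≠ 0 := by linarith
  have : 1 - x ≠ 0 := by linarith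
  field_simp
  ring

theorem continuous_psi : Continuous psi := by
  unfold psi
  fun_prop

theorem psi_zero : psi 0 = 0 := by simp [psi]

theorem artanh_le_div_one_sub_sq {x : ℝ} (hx : x ∈ Ico 0 1) : artanh x ≤ x / (1 - x ^ 2) := by
  have hderiv : ∀ t ∈ Ico (0 : ℝ) 1,
      HasDerivAt (fun s ↦ s / (1 - s ^ 2) - artanh s) (2 * t ^ 2 / (1 - t ^ 2) ^ 2) t := by
    intro t ⟨ht₀, ht₁⟩
    have hne : 1 - t ^ 2 ≠ 0 := by nlinarith
    have hden : HasDerivAt (fun s ↦ 1 - s ^ 2) (-(2 * t)) t := by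
      simpa using (hasDerivAt_pow 2 t).const_sub 1
    refine (((hasDerivAt_id' t).fun_div hden hne).fun_sub
      (hasDerivAt_artanh ⟨by linarith, ht₁⟩)).congr_deriv ?_
    field_simp
    ring
  have := nonneg_of_hasDerivAt_nonneg hderiv (fun t _ ↦ by positivity) (by simp) hx
  linarith

theorem two_mul_psi_le_mul_artanh {x : ℝ} (hx : x ∈ Ico 0 1) : 2 * psi x ≤ x * artanh x := by
  have hderiv : ∀ t ∈ Ico (0 : ℝ) 1,
      HasDerivAt (fun s ↦ s * artanh s - 2 * psi s) (t / (1 - t ^ 2) - artanh t) t := by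
    intro t ⟨ht₀, ht₁⟩
    have ht : t ∈ Ioo (-1) 1 := ⟨by linarith, ht₁⟩
    refine (((hasDerivAt_id' t).fun_mul (hasDerivAt_artanh ht)).fun_sub
      ((hasDerivAt_psi ht).const_mul 2)).congr_deriv ?_
    ring
  have := nonneg_of_hasDerivAt_nonneg hderiv
    (fun t ht ↦ sub_nonneg.2 (artanh_le_div_one_sub_sq (Ioo_subset_Ico_self ht)))
    (by simp [psi_zero]) hx
  linarith

theorem monotoneOn_psi : MonotoneOn psi (Icc 0 1) := by
  refine monotoneOn_of_hasDerivWithinAt_nonneg (f' := artanh) (convex_Icc 0 1)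
    continuous_psi.continuousOn (fun x hx ↦ ?_) (fun x hx ↦ artanh_nonneg ?_)
  · rw [interior_Icc] at hx ⊢
    exact (hasDerivAt_psi ⟨by linarith [hx.1], hx.2⟩).hasDerivWithinAt
  · rw [interior_Icc] at hx
    exact hx.1.le

theorem psi_nonneg {x : ℝ} (hx : x ∈ Icc 0 1) : 0 ≤ psi x := by
  simpa [psi_zero] using monotoneOn_psi ⟨le_rfl, zero_le_one⟩ hx hx.1

theorem monotoneOn_psi_div_sq : MonotoneOn (fun x ↦ psi x / x ^ 2) (Ioc 0 1) := by
  refine monotoneOn_of_hasDerivWithinAt_nonneg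
    (f' := fun x ↦ (artanh x * x ^ 2 - psi x * (2 * x)) / (x ^ 2) ^ 2) (convex_Ioc 0 1)
    (continuous_psi.continuousOn.div (continuous_pow 2).continuousOn
      fun x hx ↦ pow_ne_zero 2 hx.1.ne') (fun x hx ↦ ?_) (fun x hx ↦ ?_)
  · rw [interior_Ioc] at hx ⊢
    have hsq : HasDerivAt (fun x ↦ x ^ 2) (2 * x) x := by simpa using hasDerivAt_pow 2 x
    exact ((hasDerivAt_psi ⟨by linarith [hx.1], hx.2⟩).fun_div hsq
      (pow_ne_zero 2 hx.1.ne')).hasDerivWithinAt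
  · rw [interior_Ioc] at hx
    have hnum : artanh x * x ^ 2 - psi x * (2 * x) = x * (x * artanh x - 2 * psi x) := by ring
    have := two_mul_psi_le_mul_artanh (Ioo_subset_Ico_self hx)
    rw [hnum]
    exact div_nonneg (mul_nonneg hx.1.le (by linarith)) (by positivity)

theorem sum_mul_le_of_monotoneOn_div_sq {ι : Type*} (s : Finset ι) {f : ℝ → ℝ} {t : ℝ}
    (hf : MonotoneOn (fun x ↦ f x / x ^ 2) (Ioc 0 t)) (hf0 : f 0 = 0) (hft : 0 ≤ f t)
    {w y : ι → ℝ} (hw : ∀ i ∈ s, 0 ≤ w i) (hy : ∀ i ∈ s, y i ∈ Icc 0 t)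
    (hwy : ∑ i ∈ s, w i * y i ^ 2 ≤ t ^ 2) :
    ∑ i ∈ s, w i * f (y i) ≤ f t := by
  rcases le_or_gt t 0 with ht | ht
  · have hzero : ∀ i ∈ s, w i * f (y i) = 0 := fun i hi ↦ by
      rw [le_antisymm ((hy i hi).2.trans ht) (hy i hi).1, hf0, mul_zero]
    rwa [Finset.sum_eq_zero hzero]
  have hpoint : ∀ i ∈ s, f (y i) ≤ y i ^ 2 * (f t / t ^ 2) := fun i hi ↦ by
    rcases (hy i hi).1.eq_or_lt with hyi | hyi
    · simp [← hyi, hf0]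
    · rw [← div_le_iff₀' (by positivity)]
      exact hf ⟨hyi, (hy i hi).2⟩ ⟨ht, le_rfl⟩ (hy i hi).2
  calc ∑ i ∈ s, w i * f (y i)
      ≤ ∑ i ∈ s, w i * (y i ^ 2 * (f t / t ^ 2)) :=
        Finset.sum_le_sum fun i hi ↦ mul_le_mul_of_nonneg_left (hpoint i hi) (hw i hi)
    _ = (∑ i ∈ s, w i * y i ^ 2) * (f t / t ^ 2) := by simp only [Finset.sum_mul, mul_assoc]
    _ ≤ t ^ 2 * (f t / t ^ 2) := by gcongr
    _ = f t := by field_simp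

/-- If the orthogonal projections `P_j` onto the subspaces `V_j` satisfy
`Σ_j (1/p_j) P_j ≤ I` in the Loewner order, then for every `a` with `‖a‖ ≤ 1`,
`Σ_j (1/p_j) ψ(‖P_j a‖) ≤ ψ(‖a‖)`. -/
theorem psi_subadditivity {n N : ℕ}
    (V : Fin N → Submodule ℝ (EuclideanSpace ℝ (Fin n)))
    (p : Fin N → ℝ) (hp : ∀ j, 1 ≤ p j)
    (hLoewner : ∀ x : EuclideanSpace ℝ (Fin n),
      ∑ j, (1 / p j) * ‖(Submodule.orthogonalProjectionOnto (V j) x : EuclideanSpace ℝ (Fin n))‖ ^ 2 ≤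
        ‖x‖ ^ 2)
    (a : EuclideanSpace ℝ (Fin n)) (ha : ‖a‖ ≤ 1) :
    ∑ j, (1 / p j) * psi ‖(Submodule.orthogonalProjectionOnto (V j) a : EuclideanSpace ℝ (Fin n))‖ ≤
      psi ‖a‖ :=
  sum_mul_le_of_monotoneOn_div_sq _ (monotoneOn_psi_div_sq.mono (Ioc_subset_Ioc_right ha))
    psi_zero (psi_nonneg ⟨norm_nonneg a, ha⟩) (fun j _ ↦ one_div_nonneg.2 (zero_le_one.trans (hp j)))
    (fun j _ ↦ ⟨norm_nonneg _, (V j).norm_orthogonalProjectionOnto_apply_le a⟩) (hLoewner a)
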